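/- arXiv:0910.2057 — 2 statements merged into one kernel-verified Lean document; each statement's English description precedes it below -/
import Mathlib

section
/- Suppose A is a free abelian group of finite rank, n > 1 is an integer, and g ≠ 1 is a finite-order automorphism of A acting trivially on A/nA. Then n = 2, g has order 2, and A is the direct sum of A⁺ = {a ∈ A : ga = a} and A⁻ = {a ∈ A : ga = -a}. -/
open Finset

namespace Statement2Aux

variable {ι : Type*} [Fintype ι] [DecidableEq ι]

lemma algebraMap_mul_eq_smul (d : ℤ) (Y : Matrix ι ι ℤ) :
    algebraMap ℤ (Matrix ι ι ℤ) d * Y = d • Y := by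
  rw [Algebra.algebraMap_eq_smul_one, smul_mul_assoc, one_mul]

lemma entry_dvd {d : ℤ} {X : Matrix ι ι ℤ} (h : algebraMap ℤ (Matrix ι ι ℤ) d ∣ X)
    (i j : ι) : d ∣ X i j := by
  obtain ⟨Y, rfl⟩ := h
  exact ⟨Y i j, by rw [algebraMap_mul_eq_smul]; simp⟩

lemma dvd_of_entry_dvd {d : ℤ} {X : Matrix ι ι ℤ} (h : ∀ i j, d ∣ X i j) :
    algebraMap ℤ (Matrix ι ι ℤ) d ∣ X := by
  refine ⟨Matrix.of fun i j => (h i j).choose, ?_⟩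
  ext i j
  rw [algebraMap_mul_eq_smul]
  simpa using (h i j).choose_spec

lemma central_mul_dvd {a b : ℤ} {X Y : Matrix ι ι ℤ}
    (hX : algebraMap ℤ (Matrix ι ι ℤ) a ∣ X) (hY : algebraMap ℤ (Matrix ι ι ℤ) b ∣ Y) :
    algebraMap ℤ (Matrix ι ι ℤ) (a * b) ∣ X * Y := by
  obtain ⟨U, rfl⟩ := hX
  obtain ⟨V, rfl⟩ := hY
  refine ⟨U * V, ?_⟩
  rw [map_mul, mul_assoc, mul_assoc, ← mul_assoc U, ← Algebra.commutes b U, mul_assoc]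

lemma central_dvd_mul_left {d : ℤ} {X Y : Matrix ι ι ℤ}
    (h : algebraMap ℤ (Matrix ι ι ℤ) d ∣ X) :
    algebraMap ℤ (Matrix ι ι ℤ) d ∣ Y * X := by
  obtain ⟨U, rfl⟩ := h
  exact ⟨Y * U, by rw [← mul_assoc, ← Algebra.commutes d Y, mul_assoc]⟩

/-- Divisibility passes to powers: if `d ∣ M - 1` then `d ∣ M^j - 1`. -/
lemma pow_sub_one_dvd {d : ℤ} {M : Matrix ι ι ℤ}
    (h : algebraMap ℤ (Matrix ι ι ℤ) d ∣ M - 1) (j : ℕ) :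
    algebraMap ℤ (Matrix ι ι ℤ) d ∣ M ^ j - 1 := by
  induction j with
  | zero => simpa using dvd_zero _
  | succ j ih =>
      have : M ^ (j + 1) - 1 = M ^ j * (M - 1) + (M ^ j - 1) := by
        rw [pow_succ]; noncomm_ring
      rw [this]
      exact dvd_add (central_dvd_mul_left h) ih
lemma core (p q k : ℕ) (hp : p.Prime) (hq : q.Prime) (hk : 1 ≤ k)
    (y : Matrix ι ι ℤ) (hy : ¬ ∀ i j, (q : ℤ) ∣ y i j)
    (h1 : (1 + (q : ℤ) ^ k • y) ^ p = 1) :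
    p = 2 ∧ q = 2 ∧ k = 1 := by
  set x : Matrix ι ι ℤ := (q : ℤ) ^ k • y with hx
  have hxd : algebraMap ℤ (Matrix ι ι ℤ) ((q : ℤ) ^ k) ∣ x := by
    exact ⟨y, (algebraMap_mul_eq_smul _ _).symm⟩
  have hq0 : (q : ℤ) ≠ 0 := by exact_mod_cast hq.ne_zero
  have hqk0 : (q : ℤ) ^ k ≠ 0 := pow_ne_zero _ hq0
  -- binomial expansion
  have hsum : ∑ m ∈ range (p + 1), x ^ m * (p.choose m : Matrix ι ι ℤ) = 1 := by
    have hcomm : Commute x (1 : Matrix ι ι ℤ) := Commute.one_right x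
    have := hcomm.add_pow p
    rw [add_comm x 1] at this
    rw [h1] at this
    simpa using this.symm
  have h2 : ∑ m ∈ range p, x ^ (m + 1) * (p.choose (m + 1) : Matrix ι ι ℤ) = 0 := by
    have hs := Finset.sum_range_succ' (fun m => x ^ m * (p.choose m : Matrix ι ι ℤ)) p
    rw [hsum] at hs
    simpa using hs.symm
  have hp1 : p = (p - 1) + 1 := (Nat.succ_pred_eq_of_pos hp.pos).symm
  set S : Matrix ι ι ℤ := ∑ m ∈ range (p - 1), x ^ (m + 2) * (p.choose (m + 2) : Matrix ι ι ℤ)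
    with hS
  have h3 : x * (p : Matrix ι ι ℤ) + S = 0 := by
    have hs := Finset.sum_range_succ' (fun m => x ^ (m + 1) * (p.choose (m + 1) : Matrix ι ι ℤ))
      (p - 1)
    rw [← hp1, h2] at hs
    have he : ∀ m : ℕ, m + 1 + 1 = m + 2 := fun m => rfl
    simp only [he] at hs
    rw [hS]
    have hc1 : (p.choose 1 : Matrix ι ι ℤ) = (p : Matrix ι ι ℤ) := by norm_num
    rw [← hc1]
    simpa [add_comm, pow_one] using hs.symm
  have h4 : x * (p : Matrix ι ι ℤ) = -S := by linear_combination (norm := abel) h3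
  -- entry of x * p
  have h8 : ∀ i j : ι, (x * (p : Matrix ι ι ℤ)) i j = (q : ℤ) ^ k * ((p : ℤ) * y i j) := by
    intro i j
    have hc : x * (p : Matrix ι ι ℤ) = (p : ℤ) • x := by
      rw [show ((p : ℕ) : Matrix ι ι ℤ) = algebraMap ℤ (Matrix ι ι ℤ) (p : ℤ) by simp,
        ← Algebra.commutes ((p : ℤ)), algebraMap_mul_eq_smul]
    rw [hc, Matrix.smul_apply, hx, Matrix.smul_apply, smul_eq_mul, smul_eq_mul]
    ring
  -- divisibility of powers of x
  have hxpow : ∀ m : ℕ, algebraMap ℤ (Matrix ι ι ℤ) ((q : ℤ) ^ (k * m)) ∣ x ^ m := by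
    intro m
    have hcomm : Commute (algebraMap ℤ (Matrix ι ι ℤ) ((q : ℤ) ^ k)) y :=
      Algebra.commutes _ y
    refine ⟨y ^ m, ?_⟩
    rw [pow_mul, map_pow, ← hcomm.mul_pow, algebraMap_mul_eq_smul]
  -- S divisible by q^(2k)
  have hSdvd : algebraMap ℤ (Matrix ι ι ℤ) ((q : ℤ) ^ (2 * k)) ∣ S := by
    refine Finset.dvd_sum fun m _ => ?_
    refine dvd_mul_of_dvd_left ?_ _
    refine dvd_trans ?_ (hxpow (m + 2))
    refine map_dvd _ (pow_dvd_pow _ ?_)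
    nlinarith
  have hkey : ∀ i j : ι, (q : ℤ) ^ k ∣ (p : ℤ) * y i j := by
    intro i j
    have h6 : algebraMap ℤ (Matrix ι ι ℤ) ((q : ℤ) ^ (2 * k)) ∣ x * (p : Matrix ι ι ℤ) := by
      rw [h4]; exact hSdvd.neg_right
    have h7 := entry_dvd h6 i j
    rw [h8 i j, two_mul, pow_add] at h7
    exact (mul_dvd_mul_iff_left hqk0).mp h7
  -- q = p
  have hqp : q = p := by
    by_contra hne
    apply hy
    intro i j
    have h9 : (q : ℤ) ∣ (p : ℤ) * y i j :=
      dvd_trans (dvd_pow_self _ (by omega)) (hkey i j)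
    have hqint : Prime (q : ℤ) := Nat.prime_iff_prime_int.mp hq
    rcases hqint.dvd_mul.mp h9 with h | h
    · exact absurd (Nat.prime_dvd_prime_iff_eq hq hp |>.mp (by exact_mod_cast h)) hne
    · exact h
  -- k = 1
  have hk1 : k = 1 := by
    by_contra hne
    have hk2 : 2 ≤ k := by omega
    apply hy
    intro i j
    have h9 := hkey i j
    rw [← hqp] at h9
    rw [show k = 1 + (k - 1) by omega, pow_add, pow_one] at h9
    have h10 : (q : ℤ) ^ (k - 1) ∣ y i j :=
      (mul_dvd_mul_iff_left hq0).mp h9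
    exact dvd_trans (dvd_pow_self _ (by omega)) h10
  -- p = 2
  have hp2 : p = 2 := by
    by_contra hne
    have hp3 : 3 ≤ p := by
      have := hp.two_le
      omega
    apply hy
    intro i j
    have hS3 : algebraMap ℤ (Matrix ι ι ℤ) ((q : ℤ) ^ 3) ∣ S := by
      refine Finset.dvd_sum fun m hm => ?_
      rw [Finset.mem_range] at hm
      rcases eq_or_lt_of_le (by omega : m + 2 ≤ p) with heq | hlt
      · refine dvd_mul_of_dvd_left ?_ _
        refine dvd_trans ?_ (hxpow (m + 2))
        refine map_dvd _ (pow_dvd_pow _ ?_)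
        nlinarith
      · have hch : (q : ℤ) ∣ (p.choose (m + 2) : ℤ) := by
          rw [hqp]
          exact_mod_cast hp.dvd_choose_self (by omega) hlt
        have hA : algebraMap ℤ (Matrix ι ι ℤ) ((q : ℤ) ^ 2) ∣ x ^ (m + 2) := by
          refine dvd_trans ?_ (hxpow (m + 2))
          refine map_dvd _ (pow_dvd_pow _ ?_)
          nlinarith
        have hB : algebraMap ℤ (Matrix ι ι ℤ) (q : ℤ) ∣ (p.choose (m + 2) : Matrix ι ι ℤ) := by
          rw [show (p.choose (m + 2) : Matrix ι ι ℤ)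
              = algebraMap ℤ (Matrix ι ι ℤ) (p.choose (m + 2) : ℤ) by simp]
          exact map_dvd _ hch
        have := central_mul_dvd hA hB
        refine dvd_trans ?_ this
        refine map_dvd _ ?_
        rw [show ((q:ℤ)^2 * q) = q ^ 3 by ring]
    have h6 : algebraMap ℤ (Matrix ι ι ℤ) ((q : ℤ) ^ 3) ∣ x * (p : Matrix ι ι ℤ) := by
      rw [h4]; exact hS3.neg_right
    have h7 := entry_dvd h6 i j
    rw [h8 i j, hk1, ← hqp, pow_one] at h7
    rw [show (q:ℤ) * ((q:ℤ) * y i j) = (q:ℤ)^2 * y i j by ring,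
      show ((q:ℤ))^3 = (q:ℤ)^2 * q by ring] at h7
    exact (mul_dvd_mul_iff_left (pow_ne_zero 2 hq0)).mp h7
  exact ⟨hp2, by omega, hk1⟩

open Classical in
lemma lemA (p q : ℕ) (hp : p.Prime) (hq : q.Prime) (s : ℕ) (hs : 1 ≤ s)
    (H : Matrix ι ι ℤ) (hH1 : H ≠ 1) (hHp : H ^ p = 1)
    (hdvd : ∀ i j, (q : ℤ) ^ s ∣ (H - 1) i j) :
    p = 2 ∧ q = 2 ∧ s = 1 := by
  set x : Matrix ι ι ℤ := H - 1 with hxdef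
  have hx0 : x ≠ 0 := fun h => hH1 (by rw [← sub_eq_zero]; exact h)
  obtain ⟨i₀, j₀, he⟩ : ∃ i j, x i j ≠ 0 := by
    by_contra hc
    push_neg at hc
    exact hx0 (by ext i j; simpa using hc i j)
  set B : ℕ := (x i₀ j₀).natAbs with hB
  set P : ℕ → Prop := fun t => ∀ i j, (q : ℤ) ^ t ∣ x i j with hP
  have hbound : ∀ t, P t → t ≤ B := by
    intro t ht
    have h1 : (q : ℤ) ^ t ∣ x i₀ j₀ := ht i₀ j₀
    have h2 : q ^ t ∣ B := by
      rw [hB]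
      have h2' := Int.natAbs_dvd_natAbs.mpr h1
      rwa [Int.natAbs_pow, Int.natAbs_natCast] at h2'
      
    have hBpos : 0 < B := by
      rw [hB]
      exact Int.natAbs_pos.mpr he
    have h3 : q ^ t ≤ B := Nat.le_of_dvd hBpos h2
    have h4 : t < 2 ^ t := Nat.lt_two_pow_self
    have h5 : 2 ^ t ≤ q ^ t := Nat.pow_le_pow_left hq.two_le t
    omega
  set k : ℕ := Nat.findGreatest P B with hkdef
  have hPk : P k := Nat.findGreatest_spec (hbound s hdvd) hdvd
  have hks : s ≤ k := Nat.le_findGreatest (hbound s hdvd) hdvd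
  have hk1 : 1 ≤ k := le_trans hs hks
  have hnot : ¬ P (k + 1) := by
    intro hPk1
    exact Nat.findGreatest_is_greatest (Nat.lt_succ_self k) (hbound _ hPk1) hPk1
  set y : Matrix ι ι ℤ := Matrix.of fun i j => (hPk i j).choose with hy
  have hxy : x = (q : ℤ) ^ k • y := by
    ext i j
    simpa [hy] using (hPk i j).choose_spec
  have hyn : ¬ ∀ i j, (q : ℤ) ∣ y i j := by
    intro h
    apply hnot
    intro i j
    obtain ⟨z, hz⟩ := h i j
    refine ⟨z, ?_⟩
    have : x i j = (q : ℤ) ^ k * y i j := by rw [hxy]; simp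
    rw [this, hz, pow_succ]
    ring
  have h1 : (1 + (q : ℤ) ^ k • y) ^ p = 1 := by
    rw [← hxy]
    have : (1 : Matrix ι ι ℤ) + x = H := by rw [hxdef]; abel
    rw [this, hHp]
  obtain ⟨hp2, hq2, hk1'⟩ := core p q k hp hq hk1 y hyn h1
  exact ⟨hp2, hq2, by omega⟩
lemma matrix_key (M : Matrix ι ι ℤ) (m : ℕ) (hm : 0 < m) (hM : M ^ m = 1) (hM1 : M ≠ 1)
    (n : ℕ) (hn : 1 < n) (hdvd : ∀ i j, (n : ℤ) ∣ (M - 1) i j) :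
    n = 2 ∧ M ^ 2 = 1 := by
  have hfin : IsOfFinOrder M := isOfFinOrder_iff_pow_eq_one.mpr ⟨m, hm, hM⟩
  set m' : ℕ := orderOf M with hm'def
  have hm'pos : 0 < m' := hfin.orderOf_pos
  have hm'1 : 1 < m' := by
    have hne1 : m' ≠ 1 := fun h => hM1 (orderOf_eq_one_iff.mp h)
    omega
  have hMm' : M ^ m' = 1 := pow_orderOf_eq_one M
  -- entries of M^j - 1 are divisible by n
  have hpowdvd : ∀ j : ℕ, ∀ i i', (n : ℤ) ∣ (M ^ j - 1) i i' := fun j i i' =>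
    entry_dvd (pow_sub_one_dvd (dvd_of_entry_dvd hdvd) j) i i'
  -- for every prime r dividing m', get an element of prime order r
  have hH : ∀ r : ℕ, r.Prime → r ∣ m' →
      ∃ H : Matrix ι ι ℤ, H ≠ 1 ∧ H ^ r = 1 ∧ ∀ i i', (n : ℤ) ∣ (H - 1) i i' := by
    intro r hr hrdvd
    refine ⟨M ^ (m' / r), ?_, ?_, fun i i' => hpowdvd _ i i'⟩
    · intro hone
      have h1 : m' ∣ m' / r := orderOf_dvd_of_pow_eq_one hone
      have h2 : m' / r < m' := Nat.div_lt_self hm'pos hr.one_lt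
      have h3 : 0 < m' / r := Nat.div_pos (Nat.le_of_dvd hm'pos hrdvd) hr.pos
      exact absurd (Nat.le_of_dvd h3 h1) (by omega)
    · rw [← pow_mul, Nat.div_mul_cancel hrdvd, hMm']
  -- pick a prime r0 dividing m'
  have hr0 := Nat.minFac_prime (by omega : m' ≠ 1)
  obtain ⟨H0, hH01, hH0r, hH0d⟩ := hH m'.minFac hr0 (Nat.minFac_dvd m')
  -- every prime q dividing n equals 2
  have hqn : ∀ qq : ℕ, qq.Prime → qq ∣ n → qq = 2 := by
    intro qq hqq hqqn
    have : ∀ i i', (qq : ℤ) ^ 1 ∣ (H0 - 1) i i' := by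
      intro i i'
      refine dvd_trans ?_ (hH0d i i')
      simpa using Int.natCast_dvd_natCast.mpr hqqn
    exact (lemA _ _ hr0 hqq 1 le_rfl H0 hH01 hH0r this).2.1
  -- 4 does not divide n
  have h4n : ¬ (4 ∣ n) := by
    intro h4
    have : ∀ i i', (2 : ℤ) ^ 2 ∣ (H0 - 1) i i' := by
      intro i i'
      refine dvd_trans ?_ (hH0d i i')
      have : ((4 : ℕ) : ℤ) ∣ (n : ℤ) := Int.natCast_dvd_natCast.mpr h4
      simpa [show ((4:ℕ):ℤ) = (2:ℤ)^2 by norm_num] using this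
    have := (lemA _ _ hr0 Nat.prime_two 2 (by omega) H0 hH01 hH0r this).2.2
    omega
  -- n = 2
  have hn2 : n = 2 := by
    have h2n : 2 ∣ n := by
      have := hqn n.minFac (Nat.minFac_prime (by omega)) (Nat.minFac_dvd n)
      rw [← this]; exact Nat.minFac_dvd n
    obtain ⟨t, rfl⟩ := h2n
    rcases Nat.eq_or_lt_of_le (by omega : 1 ≤ t) with h | h
    · omega
    · exfalso
      have hqt := Nat.minFac_prime (by omega : t ≠ 1)
      have : t.minFac = 2 := hqn t.minFac hqt ((Nat.minFac_dvd t).mul_left 2)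
      have h2t : 2 ∣ t := this ▸ Nat.minFac_dvd t
      exact h4n (by omega)
  -- every prime r dividing m' equals 2
  have hrm : ∀ r : ℕ, r.Prime → r ∣ m' → r = 2 := by
    intro r hr hrdvd
    obtain ⟨H, h1, h2, h3⟩ := hH r hr hrdvd
    have : ∀ i i', (2 : ℤ) ^ 1 ∣ (H - 1) i i' := by
      intro i i'
      refine dvd_trans ?_ (h3 i i')
      simp [hn2]
    exact (lemA _ _ hr Nat.prime_two 1 le_rfl H h1 h2 this).1
  -- m' is a power of 2
  obtain ⟨e, hee⟩ : ∃ e : ℕ, m' = 2 ^ e :=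
    ⟨m'.primeFactorsList.length,
      Nat.eq_prime_pow_of_unique_prime_dvd (by omega) fun {d} hd hdd => hrm d hd hdd⟩
  have he1 : 1 ≤ e := by
    rcases Nat.eq_zero_or_pos e with h | h
    · rw [h] at hee; simp at hee; omega
    · omega
  -- rule out e ≥ 2
  have he2 : e = 1 := by
    by_contra hne
    have he2' : 2 ≤ e := by omega
    set c : ℕ := 2 ^ (e - 2) with hc
    have hcm : m' = 4 * c := by
      rw [hee, hc, show (4 : ℕ) = 2 ^ 2 by norm_num, ← pow_add]
      congr 1
      omega
    set L : Matrix ι ι ℤ := M ^ c with hL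
    set K : Matrix ι ι ℤ := M ^ (2 * c) with hK
    have hKL : K = L ^ 2 := by rw [hK, hL, ← pow_mul, Nat.mul_comm]
    have hK2 : K ^ 2 = 1 := by
      rw [hK, ← pow_mul]
      rw [show 2 * c * 2 = 4 * c by ring, ← hcm, hMm']
    have hK1 : K ≠ 1 := by
      intro hone
      have h1 : m' ∣ 2 * c := orderOf_dvd_of_pow_eq_one hone
      have h2 : 0 < c := Nat.pow_pos (by norm_num)
      have := Nat.le_of_dvd (by omega) h1
      omega
    -- entries of K - 1 divisible by 4
    have hL2 : algebraMap ℤ (Matrix ι ι ℤ) 2 ∣ L - 1 := by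
      refine dvd_of_entry_dvd fun i i' => ?_
      have := hpowdvd c i i'
      rwa [hn2] at this
      -- note (2:ℕ) cast
    have hKd : ∀ i i', (2 : ℤ) ^ 2 ∣ (K - 1) i i' := by
      have heq : K - 1 = (L - 1) * (L - 1) + algebraMap ℤ (Matrix ι ι ℤ) 2 * (L - 1) := by
        rw [hKL, Algebra.algebraMap_eq_smul_one]
        noncomm_ring
      intro i i'
      refine entry_dvd ?_ i i'
      rw [heq, show ((2:ℤ)^2) = 2 * 2 by norm_num]
      exact dvd_add (central_mul_dvd hL2 hL2) (central_mul_dvd (dvd_refl _) hL2)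
    have := (lemA 2 2 Nat.prime_two Nat.prime_two 2 (by omega) K hK1 hK2 hKd).2.2
    omega
  have : m' = 2 := by rw [hee, he2]; norm_num
  exact ⟨hn2, by rw [← this, hMm']⟩

end Statement2Aux

open Statement2Aux in
/-- If `A` is a free abelian group of finite rank, `n > 1`, and
`g ≠ 1` is a finite-order automorphism of `A` acting trivially on `A/nA`, then
`n = 2`, `g` has order `2`, and `A` is the (internal) direct sum of
`A⁺ = {a : g a = a}` and `A⁻ = {a : g a = -a}`. -/
theorem statement2 (A : Type*) [AddCommGroup A] [Module ℤ A]
    [Module.Free ℤ A] [Module.Finite ℤ A]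
    (g : A ≃ₗ[ℤ] A) (hg : g ≠ 1) (hfin : IsOfFinOrder g)
    (n : ℕ) (hn : 1 < n)
    (htriv : ∀ a : A, ∃ b : A, g a - a = (n : ℤ) • b) :
    n = 2 ∧ orderOf g = 2 ∧
      IsCompl (LinearMap.ker (g.toLinearMap - LinearMap.id))
              (LinearMap.ker (g.toLinearMap + LinearMap.id)) := by
  classical
  set b := Module.Free.chooseBasis ℤ A with hb
  set φ := LinearMap.toMatrixAlgEquiv b with hφ
  set u : Module.End ℤ A := g.toLinearMap with hu
  set M := φ u with hM
  have hcoe : ∀ j : ℕ, ((g ^ j : A ≃ₗ[ℤ] A) : A →ₗ[ℤ] A) = u ^ j := by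
    intro j
    exact map_pow (LinearEquiv.automorphismGroup.toLinearMapMonoidHom (R := ℤ) (M := A)) g j
  have hone : ((1 : A ≃ₗ[ℤ] A) : A →ₗ[ℤ] A) = 1 := rfl
  set m : ℕ := orderOf g with hmord
  have hmpos : 0 < m := hfin.orderOf_pos
  have hMm : M ^ m = 1 := by
    rw [hM, ← map_pow, ← hcoe, pow_orderOf_eq_one g, hone, map_one]
  have hM1 : M ≠ 1 := by
    intro h
    apply hg
    apply LinearEquiv.toLinearMap_injective
    exact (LinearMap.toMatrix b b).injective (show φ _ = φ _ by rw [hone, map_one]; exact h)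
  have hdvd : ∀ i j, (n : ℤ) ∣ (M - 1) i j := by
    intro i j
    have h1 : M - 1 = φ (u - 1) := by rw [map_sub, map_one]
    rw [h1, LinearMap.toMatrixAlgEquiv_apply]
    obtain ⟨c, hc⟩ := htriv (b j)
    have h2 : (u - 1 : Module.End ℤ A) (b j) = g (b j) - b j := by
      simp [hu]
    rw [h2, hc]
    have h3 : b.repr ((n : ℤ) • c) = (n : ℤ) • b.repr c := map_zsmul b.repr _ _
    have h4 : ((n : ℤ) • b.repr c) i = (n : ℤ) * b.repr c i := by simp
    rw [h3, h4]
    exact dvd_mul_right _ _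
  obtain ⟨hn2, hM2⟩ := matrix_key M m hmpos hMm hM1 n hn hdvd
  have hg2 : g ^ 2 = 1 := by
    apply LinearEquiv.toLinearMap_injective
    exact (LinearMap.toMatrix b b).injective (show φ _ = φ _ by rw [hcoe, map_pow, ← hM, hM2, hone, map_one])
  have hgg : ∀ a : A, g (g a) = a := by
    intro a
    have h : (g ^ 2) a = a := by rw [hg2]; rfl
    rw [pow_two] at h
    exact h
  have horder : orderOf g = 2 := orderOf_eq_prime hg2 hg
  -- torsion-freeness via the basis
  have htf : ∀ x : A, x + x = 0 → x = 0 := by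
    intro x hx
    have h1 : b.repr x + b.repr x = 0 := by rw [← map_add, hx, map_zero]
    have h2 : b.repr x = 0 := by
      ext i
      have h3 : b.repr x i + b.repr x i = 0 := by
        have := DFunLike.congr_fun h1 i
        simpa using this
      simpa using by omega
    simpa using (LinearEquiv.map_eq_zero_iff b.repr).mp h2
  refine ⟨hn2, horder, ?_, ?_⟩
  · -- disjoint
    rw [Submodule.disjoint_def]
    intro x hx1 hx2
    rw [LinearMap.mem_ker, LinearMap.sub_apply, LinearMap.id_apply, sub_eq_zero] at hx1
    rw [LinearMap.mem_ker, LinearMap.add_apply, LinearMap.id_apply] at hx2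
    refine htf x ?_
    have h4 : g.toLinearMap x = g x := rfl
    rw [h4] at hx1 hx2
    rw [hx1] at hx2
    exact hx2
  · -- codisjoint
    rw [codisjoint_iff, eq_top_iff]
    intro a _
    obtain ⟨c, hc⟩ := htriv a
    rw [hn2] at hc
    have hc' : g a = a + c + c := by
      have h5 : ((2 : ℕ) : ℤ) • c = c + c := by
        norm_cast
        exact two_nsmul c
      rw [h5] at hc
      have := sub_eq_iff_eq_add.mp hc
      rw [this]; abel
    refine Submodule.mem_sup.mpr ⟨a + c, ?_, -c, ?_, by abel⟩
    · rw [LinearMap.mem_ker, LinearMap.sub_apply, LinearMap.id_apply]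
      have h4 : g.toLinearMap (a + c) = g (a + c) := rfl
      rw [h4]
      rw [sub_eq_zero]
      refine htf (g (a + c) - (a + c)) ?_ |> sub_eq_zero.mp
      have key : g (a + c) + g (a + c) = (a + c) + (a + c) := by
        have e1 : (a + c) + (a + c) = a + g a := by rw [hc']; abel
        calc g (a + c) + g (a + c) = g ((a + c) + (a + c)) := (map_add g _ _).symm
          _ = g (a + g a) := by rw [e1]
          _ = g a + g (g a) := by rw [map_add]
          _ = g a + a := by rw [hgg]
          _ = (a + c) + (a + c) := by rw [e1]; abel
      calc g (a + c) - (a + c) + (g (a + c) - (a + c))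
          = (g (a + c) + g (a + c)) - ((a + c) + (a + c)) := by abel
        _ = 0 := by rw [key]; abel
    · rw [LinearMap.mem_ker, LinearMap.add_apply, LinearMap.id_apply]
      have h4 : g.toLinearMap (-c) = g (-c) := rfl
      rw [h4]
      refine htf (g (-c) + -c) ?_
      have key : g (-c) + g (-c) = -(-c + -c) := by
        have e1 : (-c) + (-c) = a - g a := by rw [hc']; abel
        calc g (-c) + g (-c) = g ((-c) + (-c)) := (map_add g _ _).symm
          _ = g (a - g a) := by rw [e1]
          _ = g a - g (g a) := by rw [map_sub]
          _ = g a - a := by rw [hgg]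
          _ = -(-c + -c) := by rw [e1]; abel
      calc g (-c) + -c + (g (-c) + -c)
          = (g (-c) + g (-c)) + (-c + -c) := by abel
        _ = 0 := by rw [key]; abel
end

section
/- Let N = N(A4^6) be the Niemeier lattice with root system A4^6, whose glue code C ⊂ (ℤ/5)^6 is generated by (1,0,1,4,4,1), (1,1,4,4,1,0), (1,4,4,1,0,1), (1,4,1,0,1,4), (1,1,0,1,4,4). Then no permutation in Sym6 of cycle shape 3² preserves the code C. -/
noncomputable section

/-- The glue code of the Niemeier lattice `N(A4⁶)`: the length-6 code over
`ℤ/5 = A4*/A4` generated by the five listed words. -/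
def glueA46 : Submodule (ZMod 5) (Fin 6 → ZMod 5) :=
  Submodule.span (ZMod 5)
    {![1,0,1,4,4,1], ![1,1,4,4,1,0], ![1,4,4,1,0,1], ![1,4,1,0,1,4], ![1,1,0,1,4,4]}

/-- The five generators of the glue code, indexed. -/
def gensA46 : Fin 5 → (Fin 6 → ZMod 5) :=
  ![![1,0,1,4,4,1], ![1,1,4,4,1,0], ![1,4,4,1,0,1], ![1,4,1,0,1,4], ![1,1,0,1,4,4]]

/-- A parity-check matrix for the glue code. -/
def pcA46 : Matrix (Fin 3) (Fin 6) (ZMod 5) :=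
  !![3,1,3,1,0,0; 4,2,2,0,1,0; 3,3,1,0,0,1]

/-- Fast evaluation of the function `Fin 6 → Fin 6` given by the six values. -/
def apA46 (a b c d e g i : Fin 6) : Fin 6 := List.getD [a, b, c, d, e, g] i.val 0

set_option maxRecDepth 20000 in
set_option maxHeartbeats 4000000 in
/-- Key computation: for every fixed-point-free permutation of order dividing 3 of the
six coordinates, some generator of the glue code is moved outside of the kernel of the
parity check matrix. -/
lemma keyA46 : ∀ a b c d e g : Fin 6,
    ((a != 0) && (b != 1) && (c != 2) && (d != 3) && (e != 4) && (g != 5)) = true →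
    ((apA46 a b c d e g (apA46 a b c d e g a) == 0) &&
     (apA46 a b c d e g (apA46 a b c d e g b) == 1) &&
     (apA46 a b c d e g (apA46 a b c d e g c) == 2) &&
     (apA46 a b c d e g (apA46 a b c d e g d) == 3) &&
     (apA46 a b c d e g (apA46 a b c d e g e) == 4) &&
     (apA46 a b c d e g (apA46 a b c d e g g) == 5)) = true →
    ∃ j : Fin 5, pcA46.mulVec (gensA46 j ∘ apA46 a b c d e g) ≠ 0 := by
  decide

lemma glue_le_ker : glueA46 ≤ LinearMap.ker pcA46.mulVecLin := by
  rw [glueA46, Submodule.span_le]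
  rintro x (rfl | rfl | rfl | rfl | rfl) <;>
    simp only [SetLike.mem_coe, LinearMap.mem_ker, Matrix.mulVecLin_apply] <;> decide

/-- No permutation of the six coordinates of cycle shape `3²`
(i.e. of order 3 without fixed points) preserves the glue code of `N(A4⁶)`. -/
theorem statement19 :
    ¬ ∃ σ : Equiv.Perm (Fin 6), orderOf σ = 3 ∧ (∀ i, σ i ≠ i) ∧
        (∀ v : Fin 6 → ZMod 5, v ∈ glueA46 ↔ v ∘ σ ∈ glueA46) := by
  rintro ⟨σ, h1, h2, h3⟩
  have hcube : σ ^ 3 = 1 := by rw [← h1]; exact pow_orderOf_eq_one σ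
  have h0 : ∀ i, σ (σ (σ i)) = i := by
    intro i
    have := congrArg (fun τ : Equiv.Perm (Fin 6) => τ i) hcube
    simpa [pow_succ, Equiv.Perm.mul_apply] using this
  have hap : ∀ i, apA46 (σ 0) (σ 1) (σ 2) (σ 3) (σ 4) (σ 5) i = σ i := by
    intro i; fin_cases i <;> rfl
  have hfpf : (((σ 0) != 0) && ((σ 1) != 1) && ((σ 2) != 2) && ((σ 3) != 3) &&
      ((σ 4) != 4) && ((σ 5) != 5)) = true := by
    simp only [Bool.and_eq_true, bne_iff_ne]
    exact ⟨⟨⟨⟨⟨h2 0, h2 1⟩, h2 2⟩, h2 3⟩, h2 4⟩, h2 5⟩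
  have hcube' :
      ((apA46 (σ 0) (σ 1) (σ 2) (σ 3) (σ 4) (σ 5)
          (apA46 (σ 0) (σ 1) (σ 2) (σ 3) (σ 4) (σ 5) (σ 0)) == 0) &&
       (apA46 (σ 0) (σ 1) (σ 2) (σ 3) (σ 4) (σ 5)
          (apA46 (σ 0) (σ 1) (σ 2) (σ 3) (σ 4) (σ 5) (σ 1)) == 1) &&
       (apA46 (σ 0) (σ 1) (σ 2) (σ 3) (σ 4) (σ 5)
          (apA46 (σ 0) (σ 1) (σ 2) (σ 3) (σ 4) (σ 5) (σ 2)) == 2) &&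
       (apA46 (σ 0) (σ 1) (σ 2) (σ 3) (σ 4) (σ 5)
          (apA46 (σ 0) (σ 1) (σ 2) (σ 3) (σ 4) (σ 5) (σ 3)) == 3) &&
       (apA46 (σ 0) (σ 1) (σ 2) (σ 3) (σ 4) (σ 5)
          (apA46 (σ 0) (σ 1) (σ 2) (σ 3) (σ 4) (σ 5) (σ 4)) == 4) &&
       (apA46 (σ 0) (σ 1) (σ 2) (σ 3) (σ 4) (σ 5)
          (apA46 (σ 0) (σ 1) (σ 2) (σ 3) (σ 4) (σ 5) (σ 5)) == 5)) = true := by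
    simp [hap, h0]
  obtain ⟨j, hj⟩ := keyA46 (σ 0) (σ 1) (σ 2) (σ 3) (σ 4) (σ 5) hfpf hcube'
  have hfun : apA46 (σ 0) (σ 1) (σ 2) (σ 3) (σ 4) (σ 5) = ⇑σ := funext hap
  rw [hfun] at hj
  have hg : gensA46 j ∈ glueA46 := by
    apply Submodule.subset_span
    fin_cases j <;> simp [gensA46]
  have hg' : gensA46 j ∘ σ ∈ glueA46 := (h3 (gensA46 j)).mp hg
  have hker := glue_le_ker hg'
  rw [LinearMap.mem_ker, Matrix.mulVecLin_apply] at hker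
  exact hj hker
end
end
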